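/- Let K_n be the complete graph on vertex set [n] = {1,...,n} and G' a subgraph of K_n, with edge ideals J = I(G') and I = I(K_n) in K[x_1,...,x_n] over a field K. Then J ∩ I^t = J·I^{t-1} for all t ≥ 1 if and only if G' is a complete multipartite graph on the vertex set [n], i.e., there is a partition of [n] into nonempty disjoint parts A_1, ..., A_k such that {u,v} is an edge of G' exactly when u and v lie in different parts. -/

import Mathlib

/-!
Both ideals are monomial ideals, so each side of `J ∩ I^t = J·I^{t-1}` is described by the
exponent vectors it contains, and the identity becomes a statement about multisets of edges:
an exponent vector dominating a `G'`-edge and `t` edges of `K_n` must dominate a `G'`-edge plus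
`t - 1` edges of `K_n`.

If `G'` is complete multipartite this follows by an exchange argument: if some of the `t` edges
joins two parts we are done; otherwise pick one of them, `ab`, inside a part, and a vertex `z`
of the given `G'`-edge lying in another part.  Either `x_z` has a spare power and `ab` can be
replaced by `az`, or `z` is covered by an edge `zx`, and `{ab, zx}` is traded for `{az, bx}`
(or `zx` itself is a `G'`-edge).

If `G'` is not complete multipartite, non-adjacency is not transitive: there are `v, w₁, w₂`
with `w₁ w₂` the only edge among them.  Then `x_v² x_{w₁} x_{w₂}` lies in `J ∩ I²` but not in
`J·I`, since the only `G'`-edge it contains is `w₁ w₂`, leaving `x_v²`.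
-/

/-- The edge ideal of a finite simple graph on `[n]`: the ideal of `K[x_1,…,x_n]`
generated by the monomials `x_i x_j` with `{i,j}` an edge of `G`. -/
noncomputable def edgeIdeal (K : Type) [Field K] {n : ℕ} (G : SimpleGraph (Fin n)) :
    Ideal (MvPolynomial (Fin n) K) :=
  Ideal.span {p | ∃ i j : Fin n, G.Adj i j ∧ p = MvPolynomial.X i * MvPolynomial.X j}

open scoped Pointwise
open Finsupp MvPolynomial

namespace MvPolynomial

variable {σ R : Type*} [CommSemiring R]

theorem span_monomial_image_mul (A B : Set (σ →₀ ℕ)) :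
    Ideal.span ((fun s => monomial s (1 : R)) '' A) * Ideal.span ((fun s => monomial s 1) '' B) =
      Ideal.span ((fun s => monomial s 1) '' (A + B)) := by
  rw [Ideal.span_mul_span', ← Set.image2_mul, ← Set.image2_add, Set.image_image2,
    Set.image2_image_left, Set.image2_image_right]
  simp only [monomial_mul, one_mul]

theorem span_monomial_image_pow (A : Set (σ →₀ ℕ)) (t : ℕ) :
    Ideal.span ((fun s => monomial s (1 : R)) '' A) ^ t =
      Ideal.span ((fun s => monomial s 1) '' (t • A)) := by
  induction t with
  | zero =>
    rw [pow_zero, zero_nsmul, Set.image_zero, monomial_zero', C_1, Ideal.span_singleton_one,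
      Ideal.one_eq_top]
  | succ t ih => rw [pow_succ, ih, span_monomial_image_mul, succ_nsmul]

theorem inf_span_monomial_image_le_iff [Nontrivial R] {A B C : Set (σ →₀ ℕ)} :
    Ideal.span ((fun s => monomial s (1 : R)) '' A) ⊓ Ideal.span ((fun s => monomial s 1) '' B) ≤
        Ideal.span ((fun s => monomial s 1) '' C) ↔
      ∀ m, (∃ a ∈ A, a ≤ m) → (∃ b ∈ B, b ≤ m) → ∃ c ∈ C, c ≤ m := by
  classical
  simp only [SetLike.le_def, Submodule.mem_inf, mem_ideal_span_monomial_image]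
  refine ⟨fun h m hA hB => ?_, fun h p ⟨hA, hB⟩ m hm => h m (hA m hm) (hB m hm)⟩
  have hm : (monomial m (1 : R)).support = {m} := support_monomial.trans (if_neg one_ne_zero)
  have := @h (monomial m 1)
  simp only [hm, Finset.mem_singleton, forall_eq] at this
  exact this ⟨hA, hB⟩

end MvPolynomial

lemma Finsupp.add_single_le_of_le_of_lt {σ : Type*} {r s m : σ →₀ ℕ} {z : σ} (hrs : r ≤ s)
    (hsm : s ≤ m) (hz : s z < m z) : r + single z 1 ≤ m := by
  intro i
  have := hrs i
  have := hsm i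
  rcases eq_or_ne i z with rfl | hiz
  · rw [Finsupp.add_apply, single_eq_same]; omega
  · rw [Finsupp.add_apply, single_eq_of_ne hiz, add_zero]; omega

namespace SimpleGraph

variable {σ : Type*} {G : SimpleGraph σ}

def edgeExponents (G : SimpleGraph σ) : Set (σ →₀ ℕ) :=
  {s | ∃ i j, G.Adj i j ∧ s = single i 1 + single j 1}

lemma exists_adj_eq_add_of_pos {t : ℕ} {s : σ →₀ ℕ} (hs : s ∈ t • G.edgeExponents) {z : σ}
    (hz : 0 < s z) : ∃ t', t = t' + 1 ∧ ∃ x, G.Adj z x ∧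
      ∃ s' ∈ t' • G.edgeExponents, s = s' + (single z 1 + single x 1) := by
  induction t generalizing s with
  | zero =>
    rw [zero_nsmul, Set.mem_zero] at hs
    simp [hs] at hz
  | succ t ih =>
    rw [succ_nsmul] at hs
    obtain ⟨s₀, hs₀, _, ⟨a, b, hab, rfl⟩, rfl⟩ := Set.mem_add.1 hs
    by_cases hza : z = a
    · exact ⟨t, rfl, b, hza ▸ hab, s₀, hs₀, by rw [hza]⟩
    by_cases hzb : z = b
    · exact ⟨t, rfl, a, hzb ▸ hab.symm, s₀, hs₀, by rw [hzb, add_comm (single a 1)]⟩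
    have hz₀ : 0 < s₀ z := by
      rwa [Finsupp.add_apply, Finsupp.add_apply, single_eq_of_ne hza, single_eq_of_ne hzb,
        add_zero, add_zero] at hz
    obtain ⟨t', rfl, x, hzx, s₁, hs₁, rfl⟩ := ih hs₀ hz₀
    refine ⟨t' + 1, rfl, x, hzx, s₁ + (single a 1 + single b 1), ?_, add_right_comm _ _ _⟩
    rw [succ_nsmul]
    exact Set.add_mem_add hs₁ ⟨a, b, hab, rfl⟩

lemma IsCompleteMultipartite.adj_or_adj (h : G.IsCompleteMultipartite) {u w : σ} (huw : G.Adj u w)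
    (a : σ) : G.Adj a u ∨ G.Adj a w := by
  by_contra! hn
  exact h.trans u a w (fun hua => hn.1 hua.symm) hn.2 huw

lemma IsCompleteMultipartite.exists_edgeExponents_add_le (h : G.IsCompleteMultipartite) {t : ℕ}
    {s m : σ →₀ ℕ} (hs : s ∈ (t + 1) • (⊤ : SimpleGraph σ).edgeExponents) (hsm : s ≤ m)
    (hG : ∃ g ∈ G.edgeExponents, g ≤ m) :
    ∃ x ∈ G.edgeExponents + t • (⊤ : SimpleGraph σ).edgeExponents, x ≤ m := by
  rw [succ_nsmul] at hs
  obtain ⟨s₀, hs₀, _, ⟨a, b, hab, rfl⟩, rfl⟩ := Set.mem_add.1 hs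
  by_cases hGab : G.Adj a b
  · exact ⟨_, Set.add_mem_add ⟨a, b, hGab, rfl⟩ hs₀, by rwa [add_comm]⟩
  obtain ⟨z, haz, hmz⟩ : ∃ z, G.Adj a z ∧ 0 < m z := by
    obtain ⟨_, ⟨u, w, huw, rfl⟩, hle⟩ := hG
    have hu := hle u
    have hw := hle w
    simp only [Finsupp.coe_add, Pi.add_apply, single_eq_same] at hu hw
    rcases h.adj_or_adj huw a with hau | haw
    · exact ⟨u, hau, by omega⟩
    · exact ⟨w, haw, by omega⟩
  have hbz : b ≠ z := fun hbz => hGab (hbz ▸ haz)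
  by_cases hfree : (s₀ + (single a 1 + single b 1) : σ →₀ ℕ) z < m z
  · refine ⟨single a 1 + single z 1 + s₀, Set.add_mem_add ⟨a, z, haz, rfl⟩ hs₀, ?_⟩
    have hle : s₀ + single a 1 ≤ s₀ + (single a 1 + single b 1) := by
      rw [← add_assoc]
      exact le_self_add
    convert add_single_le_of_le_of_lt hle hsm hfree using 1
    abel
  have hs₀z : 0 < s₀ z := by
    rw [Finsupp.add_apply, Finsupp.add_apply, single_eq_of_ne' haz.ne, single_eq_of_ne' hbz]
      at hfree
    omega
  obtain ⟨t', rfl, x, hzx, s₁, hs₁, rfl⟩ := exists_adj_eq_add_of_pos hs₀ hs₀z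
  by_cases hGzx : G.Adj z x
  · refine ⟨_, Set.add_mem_add ⟨z, x, hGzx, rfl⟩ (?_ : s₁ + (single a 1 + single b 1) ∈ _), ?_⟩
    · rw [succ_nsmul]; exact Set.add_mem_add hs₁ ⟨a, b, hab, rfl⟩
    · convert hsm using 1; abel
  · have hbx : b ≠ x := by
      rintro rfl
      exact h.trans a b z hGab (fun hxz => hGzx hxz.symm) haz
    refine ⟨_, Set.add_mem_add ⟨a, z, haz, rfl⟩ (?_ : s₁ + (single b 1 + single x 1) ∈ _), ?_⟩
    · rw [succ_nsmul]; exact Set.add_mem_add hs₁ ⟨b, x, (top_adj b x).2 hbx, rfl⟩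
    · convert hsm using 1; abel

lemma IsPathGraph3Compl.not_exists_edgeExponents_add_le {v w₁ w₂ : σ}
    (h : G.IsPathGraph3Compl v w₁ w₂) :
    ¬ ∃ x ∈ G.edgeExponents + (⊤ : SimpleGraph σ).edgeExponents,
      x ≤ single v 2 + single w₁ 1 + single w₂ 1 := by
  classical
  rintro ⟨_, hx, hle⟩
  obtain ⟨_, ⟨a, b, hab, rfl⟩, _, ⟨c, d, hcd, rfl⟩, rfl⟩ := Set.mem_add.1 hx
  have := h.not_adj_fst
  have := h.not_adj_snd
  have := hab.ne
  have := hab.symm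
  have := hcd.ne
  have h1 := hle a
  have h2 := hle b
  have h3 := hle c
  have h4 := hle d
  have h5 := hle w₁
  have h6 := hle w₂
  simp only [Finsupp.coe_add, Pi.add_apply, single_apply] at h1 h2 h3 h4 h5 h6
  grind

lemma isCompleteMultipartite_iff_exists_partition [Finite σ] :
    G.IsCompleteMultipartite ↔ ∃ (k : ℕ) (A : Fin k → Set σ),
      (∀ i, (A i).Nonempty) ∧
      (∀ i j, i ≠ j → Disjoint (A i) (A j)) ∧
      (⋃ i, A i) = Set.univ ∧
      (∀ u v : σ, G.Adj u v ↔ ∃ i j, i ≠ j ∧ u ∈ A i ∧ v ∈ A j) := by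
  constructor
  · intro h
    let e := Finite.equivFin (Quotient h.setoid)
    let f : σ → Fin (Nat.card (Quotient h.setoid)) := fun u => e (Quotient.mk h.setoid u)
    have hf : ∀ u v, G.Adj u v ↔ f u ≠ f v := fun u v => by
      simp only [f, ne_eq, EmbeddingLike.apply_eq_iff_eq, Quotient.eq]
      exact not_not.symm
    refine ⟨_, fun i => f ⁻¹' {i}, fun i => ?_, fun i j hij => ?_, ?_, fun u v => ?_⟩
    · obtain ⟨u, hu⟩ := Quotient.exists_rep (e.symm i)
      exact ⟨u, by simp [f, hu]⟩
    · exact (Set.disjoint_singleton.2 hij).preimage f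
    · exact Set.eq_univ_of_forall fun u => Set.mem_iUnion.2 ⟨f u, rfl⟩
    · simp [hf]
  · rintro ⟨k, A, -, -, hcover, hadj⟩
    have hpart : ∀ u, ∃ i, u ∈ A i := fun u => Set.mem_iUnion.1 (hcover ▸ Set.mem_univ u)
    have hsame : ∀ {u v i j}, ¬ G.Adj u v → u ∈ A i → v ∈ A j → i = j := fun hn hu hv => by
      by_contra hij
      exact hn ((hadj _ _).2 ⟨_, _, hij, hu, hv⟩)
    refine ⟨fun u v w huv hvw huw => ?_⟩
    obtain ⟨i, j, hij, hu, hw⟩ := (hadj u w).1 huw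
    obtain ⟨l, hv⟩ := hpart v
    exact hij ((hsame huv hu hv).trans (hsame hvw hv hw))

end SimpleGraph

section EdgeIdeal

open SimpleGraph

variable (K : Type) [Field K] {n : ℕ}

lemma edgeIdeal_eq_span_monomial_image (G : SimpleGraph (Fin n)) :
    edgeIdeal K G = Ideal.span ((fun s => monomial s (1 : K)) '' G.edgeExponents) := by
  unfold edgeIdeal edgeExponents
  congr 1
  ext p
  simp [X, monomial_mul, eq_comm]

lemma edgeIdeal_inf_pow_succ_eq_iff (G : SimpleGraph (Fin n)) (t : ℕ) :
    edgeIdeal K G ⊓ edgeIdeal K ⊤ ^ (t + 1) = edgeIdeal K G * edgeIdeal K ⊤ ^ t ↔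
      ∀ m, (∃ g ∈ G.edgeExponents, g ≤ m) → (∃ s ∈ (t + 1) • (⊤ : SimpleGraph _).edgeExponents,
        s ≤ m) → ∃ x ∈ G.edgeExponents + t • (⊤ : SimpleGraph _).edgeExponents, x ≤ m := by
  have hJI : edgeIdeal K G ≤ edgeIdeal K ⊤ := Ideal.span_mono fun p ⟨i, j, hij, hp⟩ =>
    ⟨i, j, hij.ne, hp⟩
  have hge : edgeIdeal K G * edgeIdeal K ⊤ ^ t ≤ edgeIdeal K G ⊓ edgeIdeal K ⊤ ^ (t + 1) :=
    le_inf Ideal.mul_le_left (pow_succ' (edgeIdeal K ⊤) t ▸ Ideal.mul_mono_left hJI)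
  rw [le_antisymm_iff, and_iff_left hge, edgeIdeal_eq_span_monomial_image,
    edgeIdeal_eq_span_monomial_image, span_monomial_image_pow, span_monomial_image_pow,
    span_monomial_image_mul, inf_span_monomial_image_le_iff]

lemma SimpleGraph.IsCompleteMultipartite.edgeIdeal_inf_pow_succ_eq {G : SimpleGraph (Fin n)}
    (h : G.IsCompleteMultipartite) (t : ℕ) :
    edgeIdeal K G ⊓ edgeIdeal K ⊤ ^ (t + 1) = edgeIdeal K G * edgeIdeal K ⊤ ^ t :=
  (edgeIdeal_inf_pow_succ_eq_iff K G t).2 fun _ hG ⟨_, hs, hsm⟩ =>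
    h.exists_edgeExponents_add_le hs hsm hG

lemma SimpleGraph.IsPathGraph3Compl.edgeIdeal_inf_sq_ne {G : SimpleGraph (Fin n)}
    {v w₁ w₂ : Fin n} (h : G.IsPathGraph3Compl v w₁ w₂) :
    edgeIdeal K G ⊓ edgeIdeal K ⊤ ^ 2 ≠ edgeIdeal K G * edgeIdeal K ⊤ ^ 1 := by
  rw [ne_eq, edgeIdeal_inf_pow_succ_eq_iff, one_nsmul]
  intro hvv
  refine h.not_exists_edgeExponents_add_le (hvv _ ⟨_, ⟨w₁, w₂, h.adj, rfl⟩, ?_⟩ ⟨_, ?_, le_rfl⟩)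
  · rw [add_assoc]
    exact le_add_self
  · rw [two_nsmul]
    refine Set.mem_add.2
      ⟨_, ⟨v, w₁, (top_adj v w₁).2 h.ne_fst, rfl⟩, _, ⟨v, w₂, (top_adj v w₂).2 h.ne_snd, rfl⟩, ?_⟩
    rw [add_add_add_comm, ← single_add, add_assoc]

end EdgeIdeal

/-- Let `G'` be a subgraph of the complete graph `K_n` (i.e. any simple
graph on `[n]`), `J = I(G')` and `I = I(K_n)`.  Then `J ∩ I^t = J·I^{t-1}` for all
`t ≥ 1` iff `G'` is a complete multipartite graph on the vertex set `[n]`: there is a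
partition of `[n]` into nonempty pairwise disjoint parts `A_1, …, A_k` such that `{u,v}`
is an edge of `G'` exactly when `u` and `v` lie in different parts. -/
theorem VV_vanishes_iff_complete_multipartite {K : Type} [Field K] {n : ℕ}
    (G' : SimpleGraph (Fin n)) :
    (∀ t : ℕ, 1 ≤ t →
        edgeIdeal K G' ⊓ (edgeIdeal K (⊤ : SimpleGraph (Fin n))) ^ t =
          edgeIdeal K G' * (edgeIdeal K (⊤ : SimpleGraph (Fin n))) ^ (t - 1)) ↔
      ∃ (k : ℕ) (A : Fin k → Set (Fin n)),
        (∀ i, (A i).Nonempty) ∧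
        (∀ i j, i ≠ j → Disjoint (A i) (A j)) ∧
        (⋃ i, A i) = Set.univ ∧
        (∀ u v : Fin n, G'.Adj u v ↔ ∃ i j, i ≠ j ∧ u ∈ A i ∧ v ∈ A j) := by
  rw [← SimpleGraph.isCompleteMultipartite_iff_exists_partition]
  refine ⟨fun h => ?_, fun h t ht => ?_⟩
  · by_contra hG
    obtain ⟨v, w₁, w₂, hp⟩ :=
      SimpleGraph.exists_isPathGraph3Compl_of_not_isCompleteMultipartite hG
    exact hp.edgeIdeal_inf_sq_ne K (h 2 one_le_two)
  · obtain ⟨t, rfl⟩ := Nat.exists_eq_add_of_le' ht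
    exact h.edgeIdeal_inf_pow_succ_eq K t
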